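/- arXiv:2104.13953 — 3 statements merged into one kernel-verified Lean document; each statement's English description precedes it below -/
import Mathlib

section
/- Let i and j be distinct indices in {0,…,d}. Then the integral over the simplex T of the product of the two barycentric coordinate functions satisfies ∫_T λ_i(x)·λ_j(x) dx = |T| · d!/(d+2)!. -/
open MeasureTheory Set

lemma aux_real (n : ℕ) (a : ℝ) (ha : 0 ≤ a) :
    ∫ t in Set.Ioo (0:ℝ) a, (a - t)^n = a^(n+1)/(n+1) := by
  rw [← integral_Ioc_eq_integral_Ioo, ← intervalIntegral.integral_of_le ha,
    intervalIntegral.integral_comp_sub_left (fun x => x ^ n) a]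
  simp [integral_pow]

lemma aux_lint (n : ℕ) (hn : n ≠ 0) (a : ℝ) (ha : 0 ≤ a) :
    ∫⁻ t in Set.Ioi (0:ℝ), (ENNReal.ofReal (a - t))^n = ENNReal.ofReal (a^(n+1)/(n+1)) := by
  have h1 : ∀ t ∈ Ioi (0:ℝ), (ENNReal.ofReal (a - t))^n
      = (Ioo 0 a).indicator (fun t => ENNReal.ofReal ((a-t)^n)) t := by
    intro t ht
    by_cases h : t < a
    · rw [Set.indicator_of_mem (Set.mem_Ioo.mpr ⟨ht, h⟩) (fun t => ENNReal.ofReal ((a-t)^n)), ← ENNReal.ofReal_pow (by linarith)]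
    · rw [Set.indicator_of_notMem (fun hmem => h (Set.mem_Ioo.mp hmem).2) (fun t => ENNReal.ofReal ((a-t)^n))]
      rw [ENNReal.ofReal_of_nonpos (by linarith), zero_pow hn]
  rw [setLIntegral_congr_fun measurableSet_Ioi (fun t ht => h1 t ht),
    lintegral_indicator measurableSet_Ioo,
    Measure.restrict_restrict measurableSet_Ioo,
    Set.inter_eq_left.mpr Set.Ioo_subset_Ioi_self,
    ← ofReal_integral_eq_lintegral_ofReal, aux_real n a ha]
  · exact (((continuous_const.sub continuous_id).pow n).integrableOn_Icc (a := 0) (b := a)).mono_set Set.Ioo_subset_Icc_self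
  · exact ae_restrict_of_forall_mem measurableSet_Ioo
      (fun t ht => by
        have h2 : 0 ≤ a - t := by linarith [ht.2]
        simpa using pow_nonneg h2 n)

lemma key_measure (d : ℕ) (b : AffineBasis (Fin (d + 1)) ℝ (EuclideanSpace ℝ (Fin d)))
    (i j : Fin (d + 1)) (hij : i ≠ j) (s t : ℝ) (hs : 0 < s) (ht : 0 < t) (hst : s + t < 1) :
    volume (convexHull ℝ (Set.range ⇑b) ∩ {x | s ≤ b.coord i x} ∩ {x | t ≤ b.coord j x})
      = ENNReal.ofReal ((1 - s - t)^d) * volume (convexHull ℝ (Set.range ⇑b)) := by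
  set T := convexHull ℝ (Set.range ⇑b) with hT
  set r : ℝ := 1 - s - t with hrdef
  have hr : 0 < r := by linarith
  have hst0 : 0 < s + t := by linarith
  set c : EuclideanSpace ℝ (Fin d) := AffineMap.lineMap (b i) (b j) (t/(s+t)) with hc
  set ψ := AffineMap.homothety c r with hψdef
  have hmem : ∀ x, x ∈ T ↔ ∀ k, 0 ≤ b.coord k x := by
    intro x; rw [hT, b.convexHull_eq_nonneg_coord]; exact Iff.rfl
  have hψ : ∀ k x, b.coord k (ψ x)
      = r * b.coord k x + (s * (if k = i then 1 else 0) + t * (if k = j then 1 else 0)) := by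
    intro k x
    have hkc : b.coord k c
        = (s * (if k = i then 1 else 0) + t * (if k = j then 1 else 0))/(s+t) := by
      rw [hc, AffineMap.apply_lineMap, AffineMap.lineMap_apply]
      simp only [smul_eq_mul, vsub_eq_sub, vadd_eq_add]
      rcases eq_or_ne k i with rfl | hki
      · rw [b.coord_apply_eq, b.coord_apply_ne hij, if_pos rfl, if_neg hij]
        field_simp
        ring
      · rcases eq_or_ne k j with rfl | hkj
        · rw [b.coord_apply_eq, b.coord_apply_ne hki, if_pos rfl, if_neg hki]
          field_simp
          ring
        · rw [b.coord_apply_ne hki, b.coord_apply_ne hkj, if_neg hki, if_neg hkj]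
          simp
    rw [hψdef, AffineMap.homothety_eq_lineMap, AffineMap.apply_lineMap,
      AffineMap.lineMap_apply]
    simp only [smul_eq_mul, vsub_eq_sub, vadd_eq_add]
    rw [hkc]
    field_simp
    ring
  have himg : ψ '' T = T ∩ {x | s ≤ b.coord i x} ∩ {x | t ≤ b.coord j x} := by
    ext y
    constructor
    · rintro ⟨x, hx, rfl⟩
      rw [hmem] at hx
      refine ⟨⟨(hmem _).mpr fun k => ?_, ?_⟩, ?_⟩
      · rw [hψ]
        split_ifs <;> linarith [mul_nonneg hr.le (hx k)]
      · show s ≤ b.coord i (ψ x)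
        rw [hψ, if_pos rfl, if_neg hij]
        linarith [mul_nonneg hr.le (hx i)]
      · show t ≤ b.coord j (ψ x)
        rw [hψ, if_neg (Ne.symm hij), if_pos rfl]
        linarith [mul_nonneg hr.le (hx j)]
    · rintro ⟨⟨hyT, hyi⟩, hyj⟩
      set x := AffineMap.homothety c r⁻¹ y with hxdef
      have hxy : ψ x = y := by
        rw [hψdef, hxdef, ← AffineMap.comp_apply, ← AffineMap.homothety_mul,
          mul_inv_cancel₀ hr.ne', AffineMap.homothety_one, AffineMap.id_apply]
      refine ⟨x, ?_, hxy⟩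
      rw [hmem]
      intro k
      have h1 := hψ k x
      rw [hxy] at h1
      have h3 : 0 ≤ r * b.coord k x := by
        rcases eq_or_ne k i with rfl | hki
        · rw [if_pos rfl, if_neg hij] at h1
          simp only [mem_setOf_eq] at hyi
          linarith
        · rcases eq_or_ne k j with rfl | hkj
          · rw [if_pos rfl, if_neg hki] at h1
            simp only [mem_setOf_eq] at hyj
            linarith
          · rw [if_neg hki, if_neg hkj] at h1
            have := (hmem y).mp hyT k
            linarith
      nlinarith [h3, hr]
  rw [← himg, hψdef, Measure.addHaar_image_homothety, finrank_euclideanSpace_fin,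
    abs_of_nonneg (pow_nonneg hr.le _)]

/-- For distinct indices `i j`, the integral over the simplex `T`
spanned by an affine basis of `ℝ^d` of the product of the two barycentric
coordinate functions equals `|T| * d! / (d+2)!`. -/
theorem stmt_0 (d : ℕ) (hd : 1 ≤ d)
    (b : AffineBasis (Fin (d + 1)) ℝ (EuclideanSpace ℝ (Fin d)))
    (i j : Fin (d + 1)) (hij : i ≠ j) :
    ∫ x in convexHull ℝ (Set.range ⇑b), b.coord i x * b.coord j x ∂volume
      = (volume (convexHull ℝ (Set.range ⇑b))).toReal *
          (Nat.factorial d : ℝ) / (Nat.factorial (d + 2) : ℝ) := by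
  classical
  have hd0 : d ≠ 0 := Nat.one_le_iff_ne_zero.mp hd
  set T := convexHull ℝ (Set.range ⇑b) with hT
  have hTc : IsCompact T := (Set.finite_range ⇑b).isCompact_convexHull ℝ
  have hTm : MeasurableSet T := hTc.isClosed.measurableSet
  set V : ENNReal := volume T with hV
  have hVne : V ≠ ⊤ := hTc.measure_lt_top.ne
  have hmem : ∀ x, x ∈ T ↔ ∀ k, 0 ≤ b.coord k x := by
    intro x; rw [hT, b.convexHull_eq_nonneg_coord]; exact Iff.rfl
  have hcont : ∀ k : Fin (d+1), Continuous (b.coord k) :=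
    fun k => (b.coord k).continuous_of_finiteDimensional
  have hSi : ∀ (s : ℝ) (k : Fin (d+1)),
      MeasurableSet {x : EuclideanSpace ℝ (Fin d) | s ≤ b.coord k x} :=
    fun s k => measurableSet_le measurable_const (hcont k).measurable
  have hsumle : ∀ x ∈ T, b.coord i x + b.coord j x ≤ 1 := by
    intro x hx
    have h1 : ∑ k, b.coord k x = 1 := b.sum_coord_apply_eq_one x
    have h2 : ({i, j} : Finset (Fin (d+1))).sum (fun k => b.coord k x) ≤ ∑ k, b.coord k x :=
      Finset.sum_le_sum_of_subset_of_nonneg (Finset.subset_univ _)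
        (fun k _ _ => (hmem x).mp hx k)
    rw [Finset.sum_pair hij] at h2
    linarith
  -- the main lintegral computation
  have L : ∫⁻ x in T, ENNReal.ofReal (b.coord i x * b.coord j x) ∂volume
      = ENNReal.ofReal ((1:ℝ)^(d+1+1)/((d+1:ℕ)+1)) * (ENNReal.ofReal (1/((d:ℝ)+1)) * V) := by
    have e1 : ∫⁻ x in T, ENNReal.ofReal (b.coord i x * b.coord j x) ∂volume
        = ∫⁻ x in T, ENNReal.ofReal (b.coord j x) * ENNReal.ofReal (b.coord i x) ∂volume := by
      refine setLIntegral_congr_fun hTm (fun x hx => ?_)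
      rw [mul_comm (b.coord i x), ENNReal.ofReal_mul ((hmem x).mp hx j)]
    set ν := (volume.restrict T).withDensity (fun x => ENNReal.ofReal (b.coord j x)) with hν
    have e2 : ∫⁻ x in T, ENNReal.ofReal (b.coord j x) * ENNReal.ofReal (b.coord i x) ∂volume
        = ∫⁻ x, ENNReal.ofReal (b.coord i x) ∂ν := by
      rw [hν, lintegral_withDensity_eq_lintegral_mul _
        ((hcont j).measurable.ennreal_ofReal)
        ((hcont i).measurable.ennreal_ofReal)]
      rfl
    have hνac : ν ≪ volume.restrict T := withDensity_absolutelyContinuous _ _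
    have e3 : ∫⁻ x, ENNReal.ofReal (b.coord i x) ∂ν
        = ∫⁻ s in Ioi (0:ℝ), ν {x | s ≤ b.coord i x} := by
      refine lintegral_eq_lintegral_meas_le ν ?_ ((hcont i).measurable.aemeasurable)
      exact hνac.ae_le (ae_restrict_of_forall_mem hTm (fun x hx => (hmem x).mp hx i))
    have e4 : ∀ s : ℝ, ν {x | s ≤ b.coord i x}
        = ∫⁻ t in Ioi (0:ℝ),
            volume (T ∩ {x | s ≤ b.coord i x} ∩ {x | t ≤ b.coord j x}) := by
      intro s
      rw [hν, withDensity_apply _ (hSi s i), Measure.restrict_restrict (hSi s i)]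
      rw [lintegral_eq_lintegral_meas_le _
        (ae_restrict_of_forall_mem ((hSi s i).inter hTm) (fun x hx => (hmem x).mp hx.2 j))
        ((hcont j).measurable.aemeasurable)]
      refine lintegral_congr fun t => ?_
      rw [Measure.restrict_apply (hSi t j)]
      congr 1
      ext x
      simp only [mem_inter_iff, mem_setOf_eq]
      tauto
    rw [e1, e2, e3]
    have hne1 : ∀ᵐ s ∂(volume.restrict (Ioi (0:ℝ))), s ≠ (1:ℝ) := by
      rw [ae_iff]
      have h0 : (volume.restrict (Ioi (0:ℝ))) {(1:ℝ)} = 0 :=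
        le_antisymm (le_trans (Measure.restrict_apply_le _ _) (by simp)) zero_le
      exact measure_mono_null (fun x hx => by simpa using hx) h0
    have e5 : ∀ᵐ s ∂(volume.restrict (Ioi (0:ℝ))),
        ν {x | s ≤ b.coord i x}
          = (ENNReal.ofReal (1 - s))^(d+1) * (ENNReal.ofReal (1/((d:ℝ)+1)) * V) := by
      filter_upwards [ae_restrict_mem measurableSet_Ioi, hne1] with s hs0 hsne
      simp only [mem_Ioi] at hs0
      rw [e4 s]
      rcases lt_or_gt_of_ne hsne with hlt | hgt
      · -- 0 < s < 1
        have hne2 : ∀ᵐ t ∂(volume.restrict (Ioi (0:ℝ))), t ≠ 1 - s := by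
          rw [ae_iff]
          have h0 : (volume.restrict (Ioi (0:ℝ))) {(1-s:ℝ)} = 0 :=
            le_antisymm (le_trans (Measure.restrict_apply_le _ _) (by simp)) zero_le
          exact measure_mono_null (fun x hx => by simpa using hx) h0
        have hae : ∀ᵐ t ∂(volume.restrict (Ioi (0:ℝ))),
            volume (T ∩ {x | s ≤ b.coord i x} ∩ {x | t ≤ b.coord j x})
              = (ENNReal.ofReal ((1-s) - t))^d * V := by
          filter_upwards [ae_restrict_mem measurableSet_Ioi, hne2] with t ht0 htne
          simp only [mem_Ioi] at ht0
          rcases lt_or_gt_of_ne htne with hlt' | hgt'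
          · rw [key_measure d b i j hij s t hs0 ht0 (by linarith), hV,
              ← ENNReal.ofReal_pow (by linarith)]
          · have hempty : T ∩ {x | s ≤ b.coord i x} ∩ {x | t ≤ b.coord j x} = ∅ := by
              ext x
              simp only [mem_inter_iff, mem_setOf_eq, mem_empty_iff_false, iff_false, not_and]
              intro hx hxi
              have h1 := hsumle x hx.1
              have h2 := hx.2
              linarith
            rw [hempty, measure_empty, ENNReal.ofReal_of_nonpos (by linarith),
              zero_pow hd0, zero_mul]
        rw [lintegral_congr_ae hae, lintegral_mul_const' V _ hVne,
          aux_lint d hd0 (1-s) (by linarith)]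
        rw [← mul_assoc]
        congr 1
        rw [← ENNReal.ofReal_pow (by linarith : (0:ℝ) ≤ 1 - s),
          ← ENNReal.ofReal_mul (pow_nonneg (by linarith) _)]
        congr 1
        ring
      · -- s > 1 : everything empty
        have hz : ∀ t ∈ Ioi (0:ℝ),
            volume (T ∩ {x | s ≤ b.coord i x} ∩ {x | t ≤ b.coord j x}) = 0 := by
          intro t _
          have hempty : T ∩ {x | s ≤ b.coord i x} ∩ {x | t ≤ b.coord j x} = ∅ := by
            ext x
            simp only [mem_inter_iff, mem_setOf_eq, mem_empty_iff_false, iff_false, not_and]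
            intro hx hxi
            have h1 := hsumle x hx.1
            have h2 := (hmem x).mp hx.1 j
            have h3 := hx.2
            linarith
          rw [hempty, measure_empty]
        rw [setLIntegral_congr_fun measurableSet_Ioi (fun t ht => hz t ht),
          lintegral_zero]
        rw [ENNReal.ofReal_of_nonpos (by linarith), zero_pow (Nat.succ_ne_zero d), zero_mul]
    rw [lintegral_congr_ae e5,
      lintegral_mul_const' _ _ (ENNReal.mul_ne_top ENNReal.ofReal_ne_top hVne),
      aux_lint (d+1) (Nat.succ_ne_zero d) 1 zero_le_one]
  -- convert Bochner integral to lintegral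
  have hnn : 0 ≤ᵐ[volume.restrict T] fun x => b.coord i x * b.coord j x :=
    ae_restrict_of_forall_mem hTm fun x hx =>
      mul_nonneg ((hmem x).mp hx i) ((hmem x).mp hx j)
  have hsm : AEStronglyMeasurable (fun x => b.coord i x * b.coord j x)
      (volume.restrict T) := ((hcont i).mul (hcont j)).aestronglyMeasurable.restrict
  rw [MeasureTheory.integral_eq_lintegral_of_nonneg_ae hnn hsm, L]
  rw [ENNReal.toReal_mul, ENNReal.toReal_mul, ENNReal.toReal_ofReal (by positivity),
    ENNReal.toReal_ofReal (by positivity)]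
  have hfact : (Nat.factorial (d+2) : ℝ) = ((d:ℝ)+2) * ((d:ℝ)+1) * (Nat.factorial d : ℝ) := by
    rw [show d + 2 = (d+1)+1 from rfl, Nat.factorial_succ, Nat.factorial_succ]
    push_cast
    ring
  have hfd : (Nat.factorial d : ℝ) ≠ 0 := Nat.cast_ne_zero.mpr (Nat.factorial_ne_zero d)
  rw [hfact]
  have h1 : ((d:ℝ)+1) ≠ 0 := by positivity
  have h2 : ((d:ℝ)+2) ≠ 0 := by positivity
  push_cast
  field_simp
  ring
end

section
/- One has ∫_Ω q̄(x)·(1 − 2x₁ − |x₂| − |x₃|)·𝟙_{x₁ ≥ 0}(x) dx = 0, where 𝟙_{x₁ ≥ 0} is the indicator function of the half-space {x₁ ≥ 0}. (This is the orthogonality of q̄ to the first divergence component of the edge bubble of the edge [(0,0,0),(1,0,0)] of the basic partition of the octahedron.) -/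
/-!
Reflecting the second coordinate, `x₂ ↦ -x₂`, is a volume-preserving isometry that maps the
octahedron onto itself, leaves `x₁`, `|x₂|`, `|x₃|` unchanged and flips the sign of `q̄`.
The integrand is therefore odd under a symmetry of the domain, so its integral vanishes.
-/

open MeasureTheory

theorem MeasureTheory.MeasurePreserving.setIntegral_eq_zero_of_comp_eq_neg
    {α E : Type*} [MeasurableSpace α] [NormedAddCommGroup E] [NormedSpace ℝ E]
    {μ : Measure α} {T : α → α} (hT : MeasurePreserving T μ μ) (hTe : MeasurableEmbedding T)
    {s : Set α} (hs : T ⁻¹' s = s) {f : α → E} (hf : ∀ x, f (T x) = -f x) :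
    ∫ x in s, f x ∂μ = 0 := by
  have hTs : MeasurePreserving T (μ.restrict s) (μ.restrict s) := by
    simpa only [hs] using hT.restrict_preimage_emb hTe s
  have h := hTs.integral_comp hTe f
  simp only [hf, integral_neg] at h
  have h2 : (2 : ℝ) • ∫ x in s, f x ∂μ = 0 := by
    rw [two_smul]
    nth_rewrite 1 [← h]
    exact neg_add_cancel _
  exact (smul_eq_zero.mp h2).resolve_left two_ne_zero

noncomputable def EuclideanSpace.reflectCoord {ι : Type*} [Fintype ι] [DecidableEq ι] (i : ι) :
    EuclideanSpace ℝ ι ≃ₗᵢ[ℝ] EuclideanSpace ℝ ι :=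
  LinearIsometryEquiv.piLpCongrRight 2
    (fun j => if j = i then LinearIsometryEquiv.neg ℝ else LinearIsometryEquiv.refl ℝ ℝ)

theorem EuclideanSpace.reflectCoord_apply {ι : Type*} [Fintype ι] [DecidableEq ι] (i : ι)
    (x : EuclideanSpace ℝ ι) (j : ι) :
    reflectCoord i x j = if j = i then -x j else x j := by
  by_cases h : j = i <;> simp [reflectCoord, h]

/-- On the open regular octahedron `Ω ⊂ ℝ³`, the checkerboard
pressure `q̄` is orthogonal to `(1 - 2x₁ - |x₂| - |x₃|) 𝟙_{x₁ ≥ 0}`, the first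
divergence component of the edge bubble of the edge `[(0,0,0),(1,0,0)]`. -/
theorem stmt_9 (Ω : Set (EuclideanSpace ℝ (Fin 3)))
    (hΩ : Ω = {x : EuclideanSpace ℝ (Fin 3) | |x 0| + |x 1| + |x 2| < 1})
    (qbar : EuclideanSpace ℝ (Fin 3) → ℝ)
    (hq : qbar = fun x => Real.sign (x 0) * Real.sign (x 1) * Real.sign (x 2)) :
    ∫ x in Ω, qbar x * ((1 - 2 * x 0 - |x 1| - |x 2|) *
        Set.indicator {y : EuclideanSpace ℝ (Fin 3) | 0 ≤ y 0} (fun _ => (1 : ℝ)) x)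
      ∂volume = 0 := by
  set T := EuclideanSpace.reflectCoord (1 : Fin 3)
  have hT0 (x) : T x 0 = x 0 := by simp [T, EuclideanSpace.reflectCoord_apply]
  have hT1 (x) : T x 1 = -x 1 := by simp [T, EuclideanSpace.reflectCoord_apply]
  have hT2 (x) : T x 2 = x 2 := by simp [T, EuclideanSpace.reflectCoord_apply]
  refine T.measurePreserving.setIntegral_eq_zero_of_comp_eq_neg
    T.toHomeomorph.measurableEmbedding ?_ fun x => ?_
  · ext x
    simp [hΩ, hT0, hT1, hT2]
  · simp only [hq, Set.indicator, Set.mem_ofPred_eq, hT0, hT1, hT2, abs_neg, Real.sign_neg]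
    ring
end

section
/- Define φ₀ : ℝ³ → ℝ by φ₀(x) = max(0, 1 − |x₁| − |x₂| − |x₃|), and for n ∈ {1,2,3} define b_n⁺(x) = max(x_n, 0)·φ₀(x) and b_n⁻(x) = max(−x_n, 0)·φ₀(x). Let e₁, e₂, e₃ denote the standard unit vectors of ℝ³, and let V be the real linear span of the 21 vector fields {e_m·φ₀ : m ∈ {1,2,3}} ∪ {e_m·b_n⁺ : m, n ∈ {1,2,3}} ∪ {e_m·b_n⁻ : m, n ∈ {1,2,3}} (these span the continuous piecewise quadratic vector fields with zero boundary trace on the basic partition of the octahedron). Then for every v ∈ V one has ∫_Ω q̄(x)·tr(Dv(x)) dx = 0, where Dv(x) denotes the Fréchet derivative of v at x (which exists for almost every x ∈ Ω since v is Lipschitz) and tr(Dv(x)) is its trace, i.e. the divergence of v. -/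
open MeasureTheory

section Stmt13Aux
noncomputable section
abbrev E3 := EuclideanSpace ℝ (Fin 3)

lemma trace_smulRight (L : E3 →L[ℝ] ℝ) (c : E3) :
    LinearMap.trace ℝ E3 ((L.smulRight c : E3 →L[ℝ] E3) : E3 →ₗ[ℝ] E3) = L c := by
  classical
  rw [LinearMap.trace_eq_matrix_trace ℝ (EuclideanSpace.basisFun (Fin 3) ℝ).toBasis]
  rw [Matrix.trace]
  have hc : c = ∑ i : Fin 3, c i • EuclideanSpace.single i (1:ℝ) := by
    refine (Module.Basis.sum_repr (EuclideanSpace.basisFun (Fin 3) ℝ).toBasis c).symm.trans ?_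
    simp [EuclideanSpace.basisFun_apply, OrthonormalBasis.coe_toBasis,
      OrthonormalBasis.coe_toBasis_repr_apply, EuclideanSpace.basisFun_repr]
  conv_rhs => rw [hc]
  simp [Matrix.diag, LinearMap.toMatrix_apply, EuclideanSpace.basisFun_apply,
    OrthonormalBasis.coe_toBasis, OrthonormalBasis.coe_toBasis_repr_apply,
    EuclideanSpace.basisFun_repr, mul_comm]

def reflMap (j : Fin 3) : E3 →ₗ[ℝ] E3 where
  toFun x := WithLp.toLp 2 (fun i => if i = j then -(x i) else x i)
  map_add' x y := by ext i; by_cases h : i = j <;> simp [h] <;> ring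
  map_smul' c x := by ext i; by_cases h : i = j <;> simp [h] <;> ring

lemma reflMap_invol (j : Fin 3) : Function.Involutive (reflMap j) := by
  intro x; ext i; by_cases h : i = j <;> simp [reflMap, h]

def refl3 (j : Fin 3) : E3 ≃ₗᵢ[ℝ] E3 :=
  { LinearEquiv.ofInvolutive (reflMap j) (reflMap_invol j) with
    norm_map' := by
      intro x
      simp only [LinearEquiv.coe_mk]
      rw [EuclideanSpace.norm_eq, EuclideanSpace.norm_eq]
      congr 1
      refine Finset.sum_congr rfl fun i _ => ?_
      by_cases h : i = j <;> simp [reflMap, LinearEquiv.ofInvolutive, h] }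

lemma refl3_apply (j : Fin 3) (x : E3) (i : Fin 3) :
    refl3 j x i = if i = j then -(x i) else x i := rfl

lemma abs_refl3 (j : Fin 3) (x : E3) (i : Fin 3) : |refl3 j x i| = |x i| := by
  rw [refl3_apply]; by_cases h : i = j <;> simp [h]

lemma odd_int (Ω : Set E3) (hΩ : Ω = {x : E3 | |x 0| + |x 1| + |x 2| < 1})
    (j : Fin 3) (F : E3 → ℝ) (hodd : ∀ x, F (refl3 j x) = -F x) :
    ∫ x in Ω, F x = 0 := by
  have h1 : (refl3 j) ⁻¹' Ω = Ω := by
    ext x; simp [hΩ, Set.mem_preimage, abs_refl3]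
  have h2 := ((refl3 j).measurePreserving).setIntegral_preimage_emb
    ((refl3 j).toHomeomorph.measurableEmbedding) F Ω
  rw [h1] at h2
  have h3 : ∫ x in Ω, F (refl3 j x) = ∫ x in Ω, -F x := by
    exact integral_congr_ae (Filter.Eventually.of_forall fun x => hodd x)
  rw [h3, integral_neg] at h2
  linarith

lemma hyperplane_null (i : Fin 3) : volume {x : E3 | x i = 0} = 0 := by
  have : {x : E3 | x i = 0} = (LinearMap.ker ((EuclideanSpace.proj i (𝕜 := ℝ) : E3 →L[ℝ] ℝ) : E3 →ₗ[ℝ] ℝ) : Set E3) := by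
    ext x; simp [LinearMap.mem_ker]
  rw [this]
  refine Measure.addHaar_submodule _ _ ?_
  intro h
  have h1 : (EuclideanSpace.single i (1:ℝ) : E3) ∈ LinearMap.ker ((EuclideanSpace.proj i (𝕜 := ℝ) : E3 →L[ℝ] ℝ) : E3 →ₗ[ℝ] ℝ) := by
    rw [h]; trivial
  simp [LinearMap.mem_ker] at h1

lemma sphere_null : volume {x : E3 | |x 0| + |x 1| + |x 2| = 1} = 0 := by
  set f : E3 → ℝ := fun x => |x 0| + |x 1| + |x 2| with hf
  have hconv : Convex ℝ {x : E3 | f x < 1} := by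
    have : ConvexOn ℝ Set.univ f := by
      have habs : ConvexOn ℝ Set.univ (fun t : ℝ => |t|) := by
        exact convexOn_univ_norm (E := ℝ)
      have hpc : ∀ i : Fin 3, ConvexOn ℝ Set.univ (fun x : E3 => |x i|) := by
        intro i
        have := habs.comp_linearMap (((EuclideanSpace.proj i (𝕜 := ℝ) : E3 →L[ℝ] ℝ) : E3 →ₗ[ℝ] ℝ))
        exact this
      exact ConvexOn.add (ConvexOn.add (hpc 0) (hpc 1)) (hpc 2)
    have h := this.convex_lt 1
    simpa using h
  have hcont : Continuous f := by
    fun_prop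
  have hsub : {x : E3 | f x = 1} ⊆ frontier {x : E3 | f x < 1} := by
    intro x hx
    rw [frontier, IsOpen.interior_eq (isOpen_lt hcont continuous_const)]
    constructor
    · have h1 : Filter.Tendsto (fun n : ℕ => (1 - 1/(n+1) : ℝ)) Filter.atTop (nhds 1) := by
        have := tendsto_one_div_add_atTop_nhds_zero_nat (𝕜 := ℝ)
        have := this.const_sub 1
        simpa using this
      have h2 : Filter.Tendsto (fun n : ℕ => (1 - 1/(n+1) : ℝ) • x) Filter.atTop (nhds x) := by
        simpa using h1.smul_const x
      refine mem_closure_of_tendsto h2 ?_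
      · refine Filter.Eventually.of_forall fun n => ?_
        have hn : (0:ℝ) < 1/(n+1) := by positivity
        have hn1 : (0:ℝ) ≤ 1 - 1/(n+1) := by
          have : (1:ℝ)/(n+1) ≤ 1 := by
            rw [div_le_one (by positivity)]; linarith [Nat.cast_nonneg (α := ℝ) n]
          linarith
        have : f ((1 - 1/(n+1) : ℝ) • x) = (1 - 1/(n+1)) * f x := by
          simp only [hf, PiLp.smul_apply, smul_eq_mul, abs_mul, abs_of_nonneg hn1]
          ring
        have hx1 : f x = 1 := hx
        simp only [Set.mem_setOf_eq, this, hx1]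
        linarith
    · have hx1 : f x = 1 := hx
      simp only [Set.mem_setOf_eq, hx1]
      simp
  exact measure_mono_null hsub (hconv.addHaar_frontier volume)

lemma sign_coe {t : ℝ} (h : t ≠ 0) : ((SignType.sign t : ℝ)) = Real.sign t := by
  rcases h.lt_or_gt with h1 | h1
  · simp [h1, Real.sign_of_neg h1]
  · simp [h1, Real.sign_of_pos h1]

lemma measurable_rsign : Measurable Real.sign := by
  have : Real.sign = fun r : ℝ => if r < 0 then (-1:ℝ) else if 0 < r then 1 else 0 := by
    funext r; rfl
  rw [this]
  exact (measurable_const.ite (measurableSet_lt measurable_id measurable_const)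
    (measurable_const.ite (measurableSet_lt measurable_const measurable_id) measurable_const))

lemma abs_rsign (t : ℝ) : |Real.sign t| ≤ 1 := by
  rcases lt_trichotomy t 0 with h | h | h <;>
    simp [Real.sign_of_neg, Real.sign_of_pos, Real.sign_zero, h]

lemma norm_le_l1 (x : E3) : ‖x‖ ≤ |x 0| + |x 1| + |x 2| := by
  rw [EuclideanSpace.norm_eq]
  have h1 : ∑ i : Fin 3, ‖x i‖ ^ 2 = x 0 ^ 2 + x 1 ^ 2 + x 2 ^ 2 := by
    simp [Fin.sum_univ_three, Real.norm_eq_abs, sq_abs]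
  rw [h1]
  have h2 : x 0 ^ 2 + x 1 ^ 2 + x 2 ^ 2 ≤ (|x 0| + |x 1| + |x 2|) ^ 2 := by
    nlinarith [abs_nonneg (x 0), abs_nonneg (x 1), abs_nonneg (x 2),
      sq_abs (x 0), sq_abs (x 1), sq_abs (x 2)]
  calc Real.sqrt (x 0 ^ 2 + x 1 ^ 2 + x 2 ^ 2) ≤ Real.sqrt ((|x 0| + |x 1| + |x 2|) ^ 2) :=
        Real.sqrt_le_sqrt h2
    _ = |x 0| + |x 1| + |x 2| := by
        rw [Real.sqrt_sq (by positivity)]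

lemma omega_measurable (Ω : Set E3) (hΩ : Ω = {x : E3 | |x 0| + |x 1| + |x 2| < 1}) :
    MeasurableSet Ω := by
  subst hΩ
  have : Continuous fun x : E3 => |x 0| + |x 1| + |x 2| := by fun_prop
  exact (isOpen_lt this continuous_const).measurableSet

lemma omega_finite (Ω : Set E3) (hΩ : Ω = {x : E3 | |x 0| + |x 1| + |x 2| < 1}) :
    volume Ω ≠ ⊤ := by
  have hsub : Ω ⊆ Metric.ball (0 : E3) 2 := by
    intro x hx
    rw [hΩ] at hx
    have := norm_le_l1 x
    simp only [Metric.mem_ball, dist_zero_right]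
    calc ‖x‖ ≤ |x 0| + |x 1| + |x 2| := this
      _ < 1 := hx
      _ < 2 := by norm_num
  exact ((measure_mono hsub).trans_lt measure_ball_lt_top).ne

lemma intOn (Ω : Set E3) (hΩ : Ω = {x : E3 | |x 0| + |x 1| + |x 2| < 1})
    (h : E3 → ℝ) (hm : Measurable h) (M : ℝ) (hb : ∀ x ∈ Ω, |h x| ≤ M) :
    IntegrableOn h Ω volume := by
  refine Measure.integrableOn_of_bounded (M := M) (omega_finite Ω hΩ) hm.aestronglyMeasurable ?_
  filter_upwards [ae_restrict_mem (omega_measurable Ω hΩ)] with x hx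
  simpa using hb x hx

lemma refl3_ne (j m : Fin 3) (hjm : j ≠ m) (x : E3) : refl3 j x m = x m := by
  rw [refl3_apply]; simp [Ne.symm hjm]

lemma qbar_flip (j : Fin 3) (x : E3) :
    Real.sign (refl3 j x 0) * Real.sign (refl3 j x 1) * Real.sign (refl3 j x 2)
      = -(Real.sign (x 0) * Real.sign (x 1) * Real.sign (x 2)) := by
  fin_cases j <;>
    simp [refl3_apply, Real.sign_neg, Fin.ext_iff] <;> ring

lemma qbar_int_zero (Ω : Set E3) (hΩ : Ω = {x : E3 | |x 0| + |x 1| + |x 2| < 1})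
    (j : Fin 3) (h : E3 → ℝ) (hh : ∀ x, h (refl3 j x) = h x) :
    ∫ x in Ω, (Real.sign (x 0) * Real.sign (x 1) * Real.sign (x 2)) * h x = 0 := by
  apply odd_int Ω hΩ j
  intro x
  rw [hh, qbar_flip]
  ring

def qb (x : E3) : ℝ := Real.sign (x 0) * Real.sign (x 1) * Real.sign (x 2)
def gfun (x : E3) : ℝ := 1 - |x 0| - |x 1| - |x 2|

lemma qb_abs (x : E3) : |qb x| ≤ 1 := by
  have h0 := abs_rsign (x 0); have h1 := abs_rsign (x 1); have h2 := abs_rsign (x 2)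
  have e : |qb x| = |Real.sign (x 0)| * |Real.sign (x 1)| * |Real.sign (x 2)| := by
    rw [qb, abs_mul, abs_mul]
  rw [e]
  have a1 := abs_nonneg (Real.sign (x 1))
  have a2 := abs_nonneg (Real.sign (x 2))
  exact mul_le_one₀ (mul_le_one₀ h0 a1 h1) a2 h2

lemma qb_meas : Measurable qb := by
  have h : ∀ i : Fin 3, Measurable fun x : E3 => x i := fun i => ((EuclideanSpace.proj i (𝕜 := ℝ) : E3 →L[ℝ] ℝ)).continuous.measurable
  exact ((measurable_rsign.comp (h 0)).mul (measurable_rsign.comp (h 1))).mul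
    (measurable_rsign.comp (h 2))

lemma gfun_meas : Measurable gfun := by
  have : Continuous gfun := by unfold gfun; fun_prop
  exact this.measurable

lemma gfun_abs {Ω : Set E3} (hΩ : Ω = {x : E3 | |x 0| + |x 1| + |x 2| < 1})
    {x : E3} (hx : x ∈ Ω) : |gfun x| ≤ 1 := by
  rw [hΩ] at hx
  have h := Set.mem_setOf_eq ▸ hx
  have h0 := abs_nonneg (x 0); have h1 := abs_nonneg (x 1); have h2 := abs_nonneg (x 2)
  rw [gfun, abs_le]
  constructor <;> simp only [Set.mem_setOf_eq] at hx <;> linarith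

lemma maxsign_abs {Ω : Set E3} (hΩ : Ω = {x : E3 | |x 0| + |x 1| + |x 2| < 1})
    {x : E3} (hx : x ∈ Ω) (m n : Fin 3) : |max (x n) 0 * Real.sign (x m)| ≤ 1 := by
  rw [hΩ, Set.mem_setOf_eq] at hx
  have h0 := abs_nonneg (x 0); have h1 := abs_nonneg (x 1); have h2 := abs_nonneg (x 2)
  have hxn : |x n| ≤ 1 := by
    have : |x n| ≤ |x 0| + |x 1| + |x 2| := by fin_cases n <;> simp <;> linarith
    linarith
  have hn : |max (x n) 0| ≤ 1 := by
    rcases abs_le.mp hxn with ⟨ha, hb⟩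
    rw [abs_le]
    exact ⟨le_trans (by norm_num) (le_max_right _ _), max_le hb (by norm_num)⟩
  rw [abs_mul]
  have hs := abs_rsign (x m)
  have h1 := abs_nonneg (max (x n) 0)
  have h2 := abs_nonneg (Real.sign (x m))
  exact mul_le_one₀ hn h2 hs

lemma meas_coord (i : Fin 3) : Measurable fun x : E3 => x i := by
  have : Continuous fun x : E3 => x i := by
    exact (EuclideanSpace.proj i (𝕜 := ℝ) : E3 →L[ℝ] ℝ).continuous
  exact this.measurable

lemma qb_int_zero (Ω : Set E3) (hΩ : Ω = {x : E3 | |x 0| + |x 1| + |x 2| < 1})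
    (j : Fin 3) (h : E3 → ℝ) (hh : ∀ x, h (refl3 j x) = h x) :
    ∫ x in Ω, qb x * h x = 0 := by
  apply odd_int Ω hΩ j
  intro x
  rw [hh]
  show qb (refl3 j x) * h x = -(qb x * h x)
  simp only [qb, qbar_flip]
  ring

lemma gfun_refl (j : Fin 3) (x : E3) : gfun (refl3 j x) = gfun x := by
  simp [gfun, abs_refl3]

lemma qbmul_bound {Ω : Set E3} (hΩ : Ω = {x : E3 | |x 0| + |x 1| + |x 2| < 1})
    {h : E3 → ℝ} (hb : ∀ x ∈ Ω, |h x| ≤ 1) : ∀ x ∈ Ω, |qb x * h x| ≤ 1 := by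
  intro x hx
  rw [abs_mul]
  exact mul_le_one₀ (qb_abs x) (abs_nonneg _) (hb x hx)

lemma gen_phi (Ω : Set E3) (hΩ : Ω = {x : E3 | |x 0| + |x 1| + |x 2| < 1}) (m : Fin 3) :
    IntegrableOn (fun x => qb x * (-Real.sign (x m))) Ω volume ∧
      ∫ x in Ω, qb x * (-Real.sign (x m)) = 0 := by
  obtain ⟨j, hj⟩ : ∃ j : Fin 3, j ≠ m := exists_ne m
  constructor
  · refine intOn Ω hΩ _ (qb_meas.mul (measurable_rsign.comp (meas_coord m)).neg) 1
      (qbmul_bound hΩ fun x _ => ?_)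
    rw [abs_neg]; exact abs_rsign _
  · exact qb_int_zero Ω hΩ j _ (fun x => by rw [refl3_ne j m hj])

lemma meas_A (m n : Fin 3) :
    Measurable (fun x : E3 => if m = n ∧ 0 < x n then gfun x else 0) := by
  by_cases h : m = n
  · simp only [h, true_and]
    exact Measurable.ite (measurableSet_lt measurable_const (meas_coord n))
      gfun_meas measurable_const
  · simp only [h, false_and, if_false]
    exact measurable_const

lemma meas_A' (m n : Fin 3) :
    Measurable (fun x : E3 => if m = n ∧ x n < 0 then -(gfun x) else 0) := by
  by_cases h : m = n
  · simp only [h, true_and]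
    exact Measurable.ite (measurableSet_lt (meas_coord n) measurable_const)
      gfun_meas.neg measurable_const
  · simp only [h, false_and, if_false]
    exact measurable_const

lemma meas_B (m n : Fin 3) :
    Measurable (fun x : E3 => max (x n) 0 * Real.sign (x m)) :=
  ((meas_coord n).max measurable_const).mul
    (measurable_rsign.comp (meas_coord m))

lemma meas_B' (m n : Fin 3) :
    Measurable (fun x : E3 => max (-(x n)) 0 * Real.sign (x m)) :=
  (((meas_coord n).neg).max measurable_const).mul
    (measurable_rsign.comp (meas_coord m))

lemma gen_bp (Ω : Set E3) (hΩ : Ω = {x : E3 | |x 0| + |x 1| + |x 2| < 1}) (m n : Fin 3) :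
    IntegrableOn (fun x => qb x *
        ((if m = n ∧ 0 < x n then gfun x else 0) - max (x n) 0 * Real.sign (x m))) Ω volume ∧
      ∫ x in Ω, qb x *
        ((if m = n ∧ 0 < x n then gfun x else 0) - max (x n) 0 * Real.sign (x m)) = 0 := by
  obtain ⟨j, hjm, hjn⟩ : ∃ j : Fin 3, j ≠ m ∧ j ≠ n := by
    fin_cases m <;> fin_cases n <;> decide
  have intA : IntegrableOn (fun x => qb x * (if m = n ∧ 0 < x n then gfun x else 0)) Ω volume := by
    refine intOn Ω hΩ _ (qb_meas.mul (meas_A m n)) 1 (qbmul_bound hΩ fun x hx => ?_)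
    split
    · exact gfun_abs hΩ hx
    · simp
  have intB : IntegrableOn (fun x => qb x * (max (x n) 0 * Real.sign (x m))) Ω volume := by
    exact intOn Ω hΩ _ (qb_meas.mul (meas_B m n)) 1 (qbmul_bound hΩ fun x hx => maxsign_abs hΩ hx m n)
  have heq : (fun x : E3 => qb x *
      ((if m = n ∧ 0 < x n then gfun x else 0) - max (x n) 0 * Real.sign (x m)))
      = fun x => qb x * (if m = n ∧ 0 < x n then gfun x else 0)
          - qb x * (max (x n) 0 * Real.sign (x m)) := by
    funext x; ring
  constructor
  · rw [heq]; exact intA.sub intB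
  · rw [heq, integral_sub intA intB]
    have zA : ∫ x in Ω, qb x * (if m = n ∧ 0 < x n then gfun x else 0) = 0 := by
      refine qb_int_zero Ω hΩ j _ fun x => ?_
      rw [refl3_ne j n hjn, gfun_refl]
    have zB : ∫ x in Ω, qb x * (max (x n) 0 * Real.sign (x m)) = 0 := by
      refine qb_int_zero Ω hΩ j _ fun x => ?_
      rw [refl3_ne j n hjn, refl3_ne j m hjm]
    rw [zA, zB]; ring

lemma gen_bm (Ω : Set E3) (hΩ : Ω = {x : E3 | |x 0| + |x 1| + |x 2| < 1}) (m n : Fin 3) :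
    IntegrableOn (fun x => qb x *
        ((if m = n ∧ x n < 0 then -(gfun x) else 0) - max (-(x n)) 0 * Real.sign (x m))) Ω volume ∧
      ∫ x in Ω, qb x *
        ((if m = n ∧ x n < 0 then -(gfun x) else 0) - max (-(x n)) 0 * Real.sign (x m)) = 0 := by
  obtain ⟨j, hjm, hjn⟩ : ∃ j : Fin 3, j ≠ m ∧ j ≠ n := by
    fin_cases m <;> fin_cases n <;> decide
  have intA : IntegrableOn (fun x => qb x * (if m = n ∧ x n < 0 then -(gfun x) else 0)) Ω volume := by
    refine intOn Ω hΩ _ (qb_meas.mul (meas_A' m n)) 1 (qbmul_bound hΩ fun x hx => ?_)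
    split
    · rw [abs_neg]; exact gfun_abs hΩ hx
    · simp
  have intB : IntegrableOn (fun x => qb x * (max (-(x n)) 0 * Real.sign (x m))) Ω volume := by
    refine intOn Ω hΩ _ (qb_meas.mul (meas_B' m n)) 1 (qbmul_bound hΩ fun x hx => ?_)
    have := maxsign_abs hΩ hx m n
    have hxn : |x n| ≤ 1 := by
      rw [hΩ, Set.mem_setOf_eq] at hx
      have h0 := abs_nonneg (x 0); have h1 := abs_nonneg (x 1); have h2 := abs_nonneg (x 2)
      have : |x n| ≤ |x 0| + |x 1| + |x 2| := by fin_cases n <;> simp <;> linarith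
      linarith
    have hn : |max (-(x n)) 0| ≤ 1 := by
      rcases abs_le.mp hxn with ⟨ha, hb⟩
      rw [abs_le]
      exact ⟨le_trans (by norm_num) (le_max_right _ _), max_le (by linarith) (by norm_num)⟩
    rw [abs_mul]
    exact mul_le_one₀ hn (abs_nonneg _) (abs_rsign _)
  have heq : (fun x : E3 => qb x *
      ((if m = n ∧ x n < 0 then -(gfun x) else 0) - max (-(x n)) 0 * Real.sign (x m)))
      = fun x => qb x * (if m = n ∧ x n < 0 then -(gfun x) else 0)
          - qb x * (max (-(x n)) 0 * Real.sign (x m)) := by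
    funext x; ring
  constructor
  · rw [heq]; exact intA.sub intB
  · rw [heq, integral_sub intA intB]
    have zA : ∫ x in Ω, qb x * (if m = n ∧ x n < 0 then -(gfun x) else 0) = 0 := by
      refine qb_int_zero Ω hΩ j _ fun x => ?_
      rw [refl3_ne j n hjn, gfun_refl]
    have zB : ∫ x in Ω, qb x * (max (-(x n)) 0 * Real.sign (x m)) = 0 := by
      refine qb_int_zero Ω hΩ j _ fun x => ?_
      rw [refl3_ne j n hjn, refl3_ne j m hjm]
    rw [zA, zB]; ring

def DG (x : E3) : E3 →L[ℝ] ℝ :=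
  ((0 - (SignType.sign (x 0) : ℝ) • (EuclideanSpace.proj 0 (𝕜 := ℝ) : E3 →L[ℝ] ℝ))
    - (SignType.sign (x 1) : ℝ) • (EuclideanSpace.proj 1 (𝕜 := ℝ) : E3 →L[ℝ] ℝ))
    - (SignType.sign (x 2) : ℝ) • (EuclideanSpace.proj 2 (𝕜 := ℝ) : E3 →L[ℝ] ℝ)

lemma hasFDerivAt_abs_coord {x : E3} (i : Fin 3) (hi : x i ≠ 0) :
    HasFDerivAt (fun y : E3 => |y i|)
      ((SignType.sign (x i) : ℝ) • (EuclideanSpace.proj i (𝕜 := ℝ) : E3 →L[ℝ] ℝ)) x :=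
  ((EuclideanSpace.proj i (𝕜 := ℝ) : E3 →L[ℝ] ℝ).hasFDerivAt (x := x)).abs hi

lemma hasFDerivAt_gfun {x : E3} (h0 : x 0 ≠ 0) (h1 : x 1 ≠ 0) (h2 : x 2 ≠ 0) :
    HasFDerivAt gfun (DG x) x := by
  have := (((hasFDerivAt_const (1:ℝ) x).sub (hasFDerivAt_abs_coord 0 h0)).sub
    (hasFDerivAt_abs_coord 1 h1)).sub (hasFDerivAt_abs_coord 2 h2)
  exact this

lemma DG_single {x : E3} (m : Fin 3) (hm : x m ≠ 0) :
    DG x (EuclideanSpace.single m (1:ℝ)) = -Real.sign (x m) := by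
  have e : ∀ i : Fin 3, (EuclideanSpace.proj i (𝕜 := ℝ) : E3 →L[ℝ] ℝ)
      (EuclideanSpace.single m (1:ℝ)) = if i = m then 1 else 0 := by
    intro i
    simp [PiLp.proj_apply, EuclideanSpace.single_apply]
  simp only [DG, ContinuousLinearMap.coe_sub', Pi.sub_apply, ContinuousLinearMap.zero_apply,
    ContinuousLinearMap.coe_smul', Pi.smul_apply, smul_eq_mul, e]
  fin_cases m <;> simp <;> rw [sign_coe (by simpa using hm)]

lemma proj_single (n m : Fin 3) :
    (EuclideanSpace.proj n (𝕜 := ℝ) : E3 →L[ℝ] ℝ) (EuclideanSpace.single m (1:ℝ))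
      = if n = m then 1 else 0 := by
  simp [PiLp.proj_apply, EuclideanSpace.single_apply]

lemma gfun_cont : Continuous gfun := by unfold gfun; fun_prop

lemma phi_eventually {x : E3} (hx : 0 < gfun x) :
    (fun y : E3 => max 0 (1 - |y 0| - |y 1| - |y 2|)) =ᶠ[nhds x] gfun := by
  have hmem : {y : E3 | 0 < gfun y} ∈ nhds x :=
    (isOpen_lt continuous_const gfun_cont).mem_nhds hx
  filter_upwards [hmem] with y hy
  exact max_eq_right (le_of_lt hy)

lemma hasFDerivAt_phi {x : E3} (h0 : x 0 ≠ 0) (h1 : x 1 ≠ 0) (h2 : x 2 ≠ 0)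
    (hg : 0 < gfun x) :
    HasFDerivAt (fun y : E3 => max 0 (1 - |y 0| - |y 1| - |y 2|)) (DG x) x :=
  (hasFDerivAt_gfun h0 h1 h2).congr_of_eventuallyEq (phi_eventually hg)

lemma gen_phi_trace {x : E3} (h0 : x 0 ≠ 0) (h1 : x 1 ≠ 0) (h2 : x 2 ≠ 0)
    (hg : 0 < gfun x) (m : Fin 3) :
    DifferentiableAt ℝ
      (fun y : E3 => (max 0 (1 - |y 0| - |y 1| - |y 2|)) • EuclideanSpace.single m (1:ℝ)) x ∧
    LinearMap.trace ℝ E3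
      ((fderiv ℝ (fun y : E3 =>
        (max 0 (1 - |y 0| - |y 1| - |y 2|)) • EuclideanSpace.single m (1:ℝ)) x :
          E3 →L[ℝ] E3) : E3 →ₗ[ℝ] E3) = -Real.sign (x m) := by
  have hm : x m ≠ 0 := by fin_cases m <;> assumption
  have hf : HasFDerivAt
      (fun y : E3 => (max 0 (1 - |y 0| - |y 1| - |y 2|)) • EuclideanSpace.single m (1:ℝ))
      ((DG x).smulRight (EuclideanSpace.single m (1:ℝ))) x :=
    (hasFDerivAt_phi h0 h1 h2 hg).smul_const _
  exact ⟨hf.differentiableAt, by rw [hf.fderiv, trace_smulRight, DG_single m hm]⟩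

lemma coord_cont (n : Fin 3) : Continuous fun y : E3 => y n :=
  (EuclideanSpace.proj n (𝕜 := ℝ) : E3 →L[ℝ] ℝ).continuous

lemma gen_bp_trace {x : E3} (h0 : x 0 ≠ 0) (h1 : x 1 ≠ 0) (h2 : x 2 ≠ 0)
    (hg : 0 < gfun x) (m n : Fin 3) :
    DifferentiableAt ℝ
      (fun y : E3 => (max (y n) 0 * max 0 (1 - |y 0| - |y 1| - |y 2|)) •
        EuclideanSpace.single m (1:ℝ)) x ∧
    LinearMap.trace ℝ E3
      ((fderiv ℝ (fun y : E3 => (max (y n) 0 * max 0 (1 - |y 0| - |y 1| - |y 2|)) •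
        EuclideanSpace.single m (1:ℝ)) x : E3 →L[ℝ] E3) : E3 →ₗ[ℝ] E3)
      = (if m = n ∧ 0 < x n then gfun x else 0) - max (x n) 0 * Real.sign (x m) := by
  have hm : x m ≠ 0 := by fin_cases m <;> assumption
  have hn : x n ≠ 0 := by fin_cases n <;> assumption
  rcases hn.lt_or_gt with hneg | hpos
  · have hev : (fun y : E3 => (max (y n) 0 * max 0 (1 - |y 0| - |y 1| - |y 2|)) •
        EuclideanSpace.single m (1:ℝ)) =ᶠ[nhds x] fun _ => (0 : E3) := by
      have hmem : {y : E3 | y n < 0} ∈ nhds x :=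
        (isOpen_lt (coord_cont n) continuous_const).mem_nhds hneg
      filter_upwards [hmem] with y hy
      rw [max_eq_right (le_of_lt hy)]
      simp
    have hf : HasFDerivAt (fun y : E3 => (max (y n) 0 * max 0 (1 - |y 0| - |y 1| - |y 2|)) •
        EuclideanSpace.single m (1:ℝ)) 0 x :=
      (hasFDerivAt_const (𝕜 := ℝ) (0 : E3) x).congr_of_eventuallyEq hev
    refine ⟨hf.differentiableAt, ?_⟩
    rw [hf.fderiv]
    simp [not_lt.mpr (le_of_lt hneg), max_eq_right (le_of_lt hneg)]
  · have hev : (fun y : E3 => (max (y n) 0 * max 0 (1 - |y 0| - |y 1| - |y 2|)) •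
        EuclideanSpace.single m (1:ℝ)) =ᶠ[nhds x]
        fun y => (y n * gfun y) • EuclideanSpace.single m (1:ℝ) := by
      have hmem1 : {y : E3 | 0 < y n} ∈ nhds x :=
        (isOpen_lt continuous_const (coord_cont n)).mem_nhds hpos
      have hmem2 : {y : E3 | 0 < gfun y} ∈ nhds x :=
        (isOpen_lt continuous_const gfun_cont).mem_nhds hg
      filter_upwards [hmem1, hmem2] with y hy1 hy2
      have e2 : max 0 (1 - |y 0| - |y 1| - |y 2|) = gfun y := max_eq_right (le_of_lt hy2)
      rw [max_eq_left (le_of_lt hy1), e2]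
    have hmul : HasFDerivAt (fun y : E3 => y n * gfun y)
        (x n • DG x + gfun x • (EuclideanSpace.proj n (𝕜 := ℝ) : E3 →L[ℝ] ℝ)) x :=
      HasFDerivAt.mul ((EuclideanSpace.proj n (𝕜 := ℝ) : E3 →L[ℝ] ℝ).hasFDerivAt (x := x))
        (hasFDerivAt_gfun h0 h1 h2)
    have hf : HasFDerivAt (fun y : E3 => (max (y n) 0 * max 0 (1 - |y 0| - |y 1| - |y 2|)) •
        EuclideanSpace.single m (1:ℝ))
        ((x n • DG x + gfun x • (EuclideanSpace.proj n (𝕜 := ℝ) : E3 →L[ℝ] ℝ)).smulRight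
          (EuclideanSpace.single m (1:ℝ))) x :=
      (hmul.smul_const _).congr_of_eventuallyEq hev
    refine ⟨hf.differentiableAt, ?_⟩
    rw [hf.fderiv, trace_smulRight]
    simp only [ContinuousLinearMap.add_apply, ContinuousLinearMap.coe_smul',
      Pi.smul_apply, smul_eq_mul, DG_single m hm, proj_single, hpos,
      max_eq_left (le_of_lt hpos), and_true]
    by_cases hmn : m = n
    · simp [hmn]; ring
    · rw [if_neg (fun h : n = m => hmn h.symm), if_neg (by tauto)]; ring

lemma gen_bm_trace {x : E3} (h0 : x 0 ≠ 0) (h1 : x 1 ≠ 0) (h2 : x 2 ≠ 0)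
    (hg : 0 < gfun x) (m n : Fin 3) :
    DifferentiableAt ℝ
      (fun y : E3 => (max (-(y n)) 0 * max 0 (1 - |y 0| - |y 1| - |y 2|)) •
        EuclideanSpace.single m (1:ℝ)) x ∧
    LinearMap.trace ℝ E3
      ((fderiv ℝ (fun y : E3 => (max (-(y n)) 0 * max 0 (1 - |y 0| - |y 1| - |y 2|)) •
        EuclideanSpace.single m (1:ℝ)) x : E3 →L[ℝ] E3) : E3 →ₗ[ℝ] E3)
      = (if m = n ∧ x n < 0 then -(gfun x) else 0) - max (-(x n)) 0 * Real.sign (x m) := by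
  have hm : x m ≠ 0 := by fin_cases m <;> assumption
  have hn : x n ≠ 0 := by fin_cases n <;> assumption
  rcases hn.lt_or_gt with hneg | hpos
  · have hev : (fun y : E3 => (max (-(y n)) 0 * max 0 (1 - |y 0| - |y 1| - |y 2|)) •
        EuclideanSpace.single m (1:ℝ)) =ᶠ[nhds x]
        fun y => (-(y n) * gfun y) • EuclideanSpace.single m (1:ℝ) := by
      have hmem1 : {y : E3 | y n < 0} ∈ nhds x :=
        (isOpen_lt (coord_cont n) continuous_const).mem_nhds hneg
      have hmem2 : {y : E3 | 0 < gfun y} ∈ nhds x :=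
        (isOpen_lt continuous_const gfun_cont).mem_nhds hg
      filter_upwards [hmem1, hmem2] with y hy1 hy2
      have e2 : max 0 (1 - |y 0| - |y 1| - |y 2|) = gfun y := max_eq_right (le_of_lt hy2)
      rw [max_eq_left (by linarith : (0:ℝ) ≤ -(y n)), e2]
    have hmul : HasFDerivAt (fun y : E3 => -(y n) * gfun y)
        (-(x n) • DG x + gfun x • (-(EuclideanSpace.proj n (𝕜 := ℝ) : E3 →L[ℝ] ℝ))) x :=
      HasFDerivAt.mul
        (((EuclideanSpace.proj n (𝕜 := ℝ) : E3 →L[ℝ] ℝ).hasFDerivAt (x := x)).neg)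
        (hasFDerivAt_gfun h0 h1 h2)
    have hf : HasFDerivAt (fun y : E3 => (max (-(y n)) 0 * max 0 (1 - |y 0| - |y 1| - |y 2|)) •
        EuclideanSpace.single m (1:ℝ))
        ((-(x n) • DG x + gfun x • (-(EuclideanSpace.proj n (𝕜 := ℝ) : E3 →L[ℝ] ℝ))).smulRight
          (EuclideanSpace.single m (1:ℝ))) x :=
      (hmul.smul_const _).congr_of_eventuallyEq hev
    refine ⟨hf.differentiableAt, ?_⟩
    rw [hf.fderiv, trace_smulRight]
    simp only [ContinuousLinearMap.add_apply, ContinuousLinearMap.coe_smul',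
      Pi.smul_apply, smul_eq_mul, ContinuousLinearMap.neg_apply, DG_single m hm, proj_single,
      hneg, max_eq_left (by linarith : (0:ℝ) ≤ -(x n)), and_true]
    by_cases hmn : m = n
    · simp [hmn]; ring
    · rw [if_neg (fun h : n = m => hmn h.symm), if_neg (by tauto)]; ring
  · have hev : (fun y : E3 => (max (-(y n)) 0 * max 0 (1 - |y 0| - |y 1| - |y 2|)) •
        EuclideanSpace.single m (1:ℝ)) =ᶠ[nhds x] fun _ => (0 : E3) := by
      have hmem : {y : E3 | 0 < y n} ∈ nhds x :=
        (isOpen_lt continuous_const (coord_cont n)).mem_nhds hpos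
      filter_upwards [hmem] with y hy
      rw [max_eq_right (by linarith : -(y n) ≤ 0)]
      simp
    have hf : HasFDerivAt (fun y : E3 => (max (-(y n)) 0 * max 0 (1 - |y 0| - |y 1| - |y 2|)) •
        EuclideanSpace.single m (1:ℝ)) 0 x :=
      (hasFDerivAt_const (𝕜 := ℝ) (0 : E3) x).congr_of_eventuallyEq hev
    refine ⟨hf.differentiableAt, ?_⟩
    rw [hf.fderiv]
    simp [not_lt.mpr (le_of_lt hpos), max_eq_right (by linarith : -(x n) ≤ 0)]

end
end Stmt13Aux

/-- Let `φ₀ x = max 0 (1 - |x₁| - |x₂| - |x₃|)` be the hat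
function of the center node of the basic partition of the octahedron `Ω`, and
for `n ∈ {1,2,3}` let `bₙ⁺ x = max (xₙ) 0 * φ₀ x`, `bₙ⁻ x = max (-xₙ) 0 * φ₀ x`.
Let `V` be the span of the 21 vector fields `e_m φ₀`, `e_m bₙ⁺`, `e_m bₙ⁻`
(spanning the continuous piecewise quadratic vector fields with zero boundary
trace).  Then for every `v ∈ V` the checkerboard pressure `q̄` is orthogonal to
the divergence of `v`, i.e. `∫_Ω q̄ (tr Dv) = 0`, where `Dv x = fderiv ℝ v x`
(which exists a.e. on `Ω`, and `fderiv` is defined to be `0` elsewhere). -/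
theorem stmt_13 (Ω : Set (EuclideanSpace ℝ (Fin 3)))
    (hΩ : Ω = {x : EuclideanSpace ℝ (Fin 3) | |x 0| + |x 1| + |x 2| < 1})
    (qbar : EuclideanSpace ℝ (Fin 3) → ℝ)
    (hq : qbar = fun x => Real.sign (x 0) * Real.sign (x 1) * Real.sign (x 2))
    (φ₀ : EuclideanSpace ℝ (Fin 3) → ℝ)
    (hφ₀ : φ₀ = fun x => max 0 (1 - |x 0| - |x 1| - |x 2|))
    (bp bm : Fin 3 → EuclideanSpace ℝ (Fin 3) → ℝ)
    (hbp : bp = fun n x => max (x n) 0 * φ₀ x)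
    (hbm : bm = fun n x => max (-(x n)) 0 * φ₀ x)
    (S : Set (EuclideanSpace ℝ (Fin 3) → EuclideanSpace ℝ (Fin 3)))
    (hS : S = {f | ∃ m : Fin 3, f = fun x => φ₀ x • EuclideanSpace.single m (1 : ℝ)}
        ∪ {f | ∃ m n : Fin 3, f = fun x => bp n x • EuclideanSpace.single m (1 : ℝ)}
        ∪ {f | ∃ m n : Fin 3, f = fun x => bm n x • EuclideanSpace.single m (1 : ℝ)}) :
    ∀ v ∈ Submodule.span ℝ S,
      ∫ x in Ω, qbar x *
          (LinearMap.trace ℝ (EuclideanSpace ℝ (Fin 3))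
            (fderiv ℝ v x : EuclideanSpace ℝ (Fin 3) →ₗ[ℝ] EuclideanSpace ℝ (Fin 3)))
        ∂volume = 0 := by
  subst hΩ hq hφ₀ hbp hbm hS
  have hae : ∀ᵐ x : E3, x 0 ≠ 0 ∧ x 1 ≠ 0 ∧ x 2 ≠ 0 := by
    rw [MeasureTheory.ae_iff]
    have hsub : {x : E3 | ¬(x 0 ≠ 0 ∧ x 1 ≠ 0 ∧ x 2 ≠ 0)} ⊆
        ({x : E3 | x 0 = 0} ∪ {x : E3 | x 1 = 0}) ∪ {x : E3 | x 2 = 0} := by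
      intro x hx
      simp only [Set.mem_setOf_eq, not_and_or, not_ne_iff] at hx
      rcases hx with h | h | h
      · exact Or.inl (Or.inl h)
      · exact Or.inl (Or.inr h)
      · exact Or.inr h
    exact measure_mono_null hsub
      (measure_union_null (measure_union_null (hyperplane_null 0) (hyperplane_null 1))
        (hyperplane_null 2))
  intro v hv
  have hP : ∃ d : E3 → ℝ,
      (∀ x : E3, x ∈ ({x : E3 | |x 0| + |x 1| + |x 2| < 1} : Set E3) →
          x 0 ≠ 0 → x 1 ≠ 0 → x 2 ≠ 0 →
        DifferentiableAt ℝ v x ∧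
          LinearMap.trace ℝ E3 ((fderiv ℝ v x : E3 →L[ℝ] E3) : E3 →ₗ[ℝ] E3) = d x) ∧
      IntegrableOn (fun x => qb x * d x) {x : E3 | |x 0| + |x 1| + |x 2| < 1} volume ∧
      ∫ x in {x : E3 | |x 0| + |x 1| + |x 2| < 1}, qb x * d x = 0 := by
    induction hv using Submodule.span_induction with
    | mem f hf =>
      have hgpos : ∀ x : E3, x ∈ ({x : E3 | |x 0| + |x 1| + |x 2| < 1} : Set E3) →
          0 < gfun x := by
        intro x hx
        simp only [Set.mem_setOf_eq] at hx
        simp only [gfun]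
        linarith
      rcases hf with (⟨m, rfl⟩ | ⟨m, n, rfl⟩) | ⟨m, n, rfl⟩
      · exact ⟨fun x => -Real.sign (x m),
          fun x hx h0 h1 h2 => gen_phi_trace h0 h1 h2 (hgpos x hx) m,
          (gen_phi _ rfl m).1, (gen_phi _ rfl m).2⟩
      · exact ⟨fun x => (if m = n ∧ 0 < x n then gfun x else 0) - max (x n) 0 * Real.sign (x m),
          fun x hx h0 h1 h2 => gen_bp_trace h0 h1 h2 (hgpos x hx) m n,
          (gen_bp _ rfl m n).1, (gen_bp _ rfl m n).2⟩
      · exact ⟨fun x => (if m = n ∧ x n < 0 then -(gfun x) else 0)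
            - max (-(x n)) 0 * Real.sign (x m),
          fun x hx h0 h1 h2 => gen_bm_trace h0 h1 h2 (hgpos x hx) m n,
          (gen_bm _ rfl m n).1, (gen_bm _ rfl m n).2⟩
    | zero =>
      refine ⟨fun _ => 0, fun x _ _ _ _ => ?_, by simpa using integrableOn_zero, by simp⟩
      have hz : (0 : E3 → E3) = fun _ : E3 => (0 : E3) := rfl
      constructor
      · rw [hz]; exact differentiableAt_const (0 : E3)
      · rw [hz, fderiv_const_apply]
        simp
    | add f g hfm hgm ihf ihg =>
      obtain ⟨d1, hpt1, hint1, hz1⟩ := ihf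
      obtain ⟨d2, hpt2, hint2, hz2⟩ := ihg
      have heq : (fun x => qb x * (d1 x + d2 x))
          = fun x => qb x * d1 x + qb x * d2 x := by funext x; ring
      refine ⟨fun x => d1 x + d2 x, ?_, ?_, ?_⟩
      · intro x hx h0 h1 h2
        obtain ⟨hd1, ht1⟩ := hpt1 x hx h0 h1 h2
        obtain ⟨hd2, ht2⟩ := hpt2 x hx h0 h1 h2
        refine ⟨hd1.add hd2, ?_⟩
        have hfd : fderiv ℝ (f + g) x = fderiv ℝ f x + fderiv ℝ g x := fderiv_add hd1 hd2
        rw [hfd, ContinuousLinearMap.coe_add, map_add, ht1, ht2]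
      · rw [heq]; exact hint1.add hint2
      · rw [heq, integral_add hint1 hint2, hz1, hz2, add_zero]
    | smul a f hfm ihf =>
      obtain ⟨d1, hpt1, hint1, hz1⟩ := ihf
      have heq : (fun x => qb x * (a * d1 x)) = fun x => a * (qb x * d1 x) := by funext x; ring
      refine ⟨fun x => a * d1 x, ?_, ?_, ?_⟩
      · intro x hx h0 h1 h2
        obtain ⟨hd1, ht1⟩ := hpt1 x hx h0 h1 h2
        refine ⟨hd1.const_smul a, ?_⟩
        have hfd : fderiv ℝ (a • f) x = a • fderiv ℝ f x := fderiv_const_smul hd1 a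
        rw [hfd, ContinuousLinearMap.coe_smul, LinearMap.map_smul, ht1, smul_eq_mul]
      · rw [heq]; exact hint1.const_mul a
      · rw [heq, MeasureTheory.integral_const_mul, hz1, mul_zero]
  obtain ⟨d, hpt, hint, hz⟩ := hP
  rw [← hz]
  refine setIntegral_congr_ae (omega_measurable _ rfl) ?_
  filter_upwards [hae] with x hx hxΩ
  obtain ⟨_, ht⟩ := hpt x hxΩ hx.1 hx.2.1 hx.2.2
  show qb x * _ = qb x * d x
  rw [ht]
end
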